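/- The function H(x) := cos x - sin²x/cos x - sin 2x · log((1+sin x)/cos x) satisfies H'(x) < -sin x < 0 for all x in (0, x_root), where x_root is the unique root of φ_even(x) = 1 - sin x log((1+sin x)/cos x) in (0, π/2). Since H(0⁺) = 1 > 0 and H(x_root) = -cos x_root - sin²x_root/cos x_root < 0, H has a unique root x_balanced in (0, x_root). -/

import Mathlib

/-!
With `invGd x = log ((1 + sin x) / cos x)`, whose derivative is `1 / cos x`, one has
`H' x + sin x = -4 sin x · φ_even x - sin³x / cos²x - 2 invGd x`. Since `sin` and `invGd` are
nonnegative and increasing on `[0, π/2)`, `φ_even` is decreasing there, hence positive on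
`(0, x_root)`, and `H` is strictly decreasing on `[0, x_root]`. At `x_root` the relation
`invGd = 1 / sin` turns `sin 2x · invGd x` into `2 cos x`, which makes `H (x_root)` negative.
-/

open Real Set

/-- φ_even(x) = 1 - sin x · log((1+sin x)/cos x). -/
noncomputable def phiEven (x : ℝ) : ℝ := 1 - sin x * log ((1 + sin x) / cos x)

/-- H(x) = 2ĥ(x) = cos x - sin²x/cos x - sin 2x · log((1+sin x)/cos x). -/
noncomputable def Hbal (x : ℝ) : ℝ :=
  cos x - sin x^2 / cos x - sin (2*x) * log ((1 + sin x) / cos x)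

/-- The inverse Gudermannian function `log (sec x + tan x)`. -/
noncomputable def invGd (x : ℝ) : ℝ := log ((1 + sin x) / cos x)

lemma one_add_sin_ne_zero {x : ℝ} (hc : cos x ≠ 0) : 1 + sin x ≠ 0 := by
  intro h
  have hs : sin x = -1 := by linarith
  exact hc (by nlinarith [sin_sq_add_cos_sq x])

lemma hasDerivAt_invGd {x : ℝ} (hc : cos x ≠ 0) : HasDerivAt invGd (1 / cos x) x := by
  have hquot : HasDerivAt (fun y => (1 + sin y) / cos y)
      (((0 + cos x) * cos x - (1 + sin x) * (-sin x)) / cos x ^ 2) x :=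
    ((hasDerivAt_const x 1).add (hasDerivAt_sin x)).div (hasDerivAt_cos x) hc
  have hs := one_add_sin_ne_zero hc
  refine (hquot.log (div_ne_zero hs hc)).congr_deriv ?_
  field_simp
  linear_combination sin_sq_add_cos_sq x

lemma invGd_pos {x : ℝ} (hx : x ∈ Ioo 0 (π / 2)) : 0 < invGd x := by
  have hc : 0 < cos x := cos_pos_of_mem_Ioo ⟨by linarith [hx.1, pi_pos], hx.2⟩
  have hs : 0 < sin x := sin_pos_of_pos_of_lt_pi hx.1 (by linarith [hx.2, pi_pos])
  exact log_pos ((one_lt_div hc).2 (by linarith [cos_le_one x]))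

lemma strictMonoOn_invGd : StrictMonoOn invGd (Ioo (-(π / 2)) (π / 2)) := by
  refine strictMonoOn_of_deriv_pos (convex_Ioo _ _)
    (fun x hx => (hasDerivAt_invGd (cos_pos_of_mem_Ioo hx).ne').continuousAt.continuousWithinAt)
    fun x hx => ?_
  rw [interior_Ioo] at hx
  have hc := cos_pos_of_mem_Ioo hx
  rw [(hasDerivAt_invGd hc.ne').deriv]
  positivity

lemma strictAntiOn_phiEven : StrictAntiOn phiEven (Ico 0 (π / 2)) := by
  intro x hx y hy hxy
  have hpi := pi_pos
  have hsin : sin x < sin y :=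
    strictMonoOn_sin ⟨by linarith [hx.1], hx.2.le⟩ ⟨by linarith [hy.1], hy.2.le⟩ hxy
  have hgd : invGd x < invGd y :=
    strictMonoOn_invGd ⟨by linarith [hx.1], hx.2⟩ ⟨by linarith [hy.1], hy.2⟩ hxy
  have hsin0 : 0 ≤ sin x := sin_nonneg_of_nonneg_of_le_pi hx.1 (by linarith [hx.2])
  have hgd0 : 0 ≤ invGd x := by
    rcases hx.1.eq_or_lt with h | h
    · simp [invGd, ← h]
    · exact (invGd_pos ⟨h, hx.2⟩).le
  show 1 - sin y * invGd y < 1 - sin x * invGd x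
  nlinarith [mul_lt_mul'' hsin hgd hsin0 hgd0]

lemma hasDerivAt_Hbal {x : ℝ} (hc : cos x ≠ 0) :
    HasDerivAt Hbal (-5 * sin x - sin x ^ 3 / cos x ^ 2 - 2 * invGd x
      + 4 * sin x ^ 2 * invGd x) x := by
  have hsq : HasDerivAt (fun y => sin y ^ 2 / cos y)
      (((2 : ℕ) * sin x ^ 1 * cos x * cos x - sin x ^ 2 * (-sin x)) / cos x ^ 2) x :=
    ((hasDerivAt_sin x).pow 2).div (hasDerivAt_cos x) hc
  have hsin2 : HasDerivAt (fun y => sin (2 * y)) (cos (2 * x) * 2) x :=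
    (hasDerivAt_sin (2 * x)).comp x (by simpa using (hasDerivAt_id x).const_mul 2)
  refine (((hasDerivAt_cos x).sub hsq).sub (hsin2.mul (hasDerivAt_invGd hc))).congr_deriv ?_
  have hcos2 : cos (2 * x) = 1 - 2 * sin x ^ 2 := by
    rw [cos_two_mul]; linarith [sin_sq_add_cos_sq x]
  rw [sin_two_mul, hcos2]
  field_simp
  ring

lemma deriv_Hbal_lt_neg_sin {x : ℝ} (hx : x ∈ Ioo 0 (π / 2)) (hφ : 0 < phiEven x) :
    deriv Hbal x < -sin x := by
  have hc : 0 < cos x := cos_pos_of_mem_Ioo ⟨by linarith [hx.1, pi_pos], hx.2⟩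
  have hs : 0 < sin x := sin_pos_of_pos_of_lt_pi hx.1 (by linarith [hx.2, pi_pos])
  have hgd := invGd_pos hx
  have hφ' : 0 < 1 - sin x * invGd x := hφ
  rw [(hasDerivAt_Hbal hc.ne').deriv]
  have : 0 < sin x ^ 3 / cos x ^ 2 := by positivity
  nlinarith [mul_pos hs hφ']

lemma Hbal_zero : Hbal 0 = 1 := by simp [Hbal]

lemma Hbal_of_phiEven_eq_zero {x : ℝ} (hs : sin x ≠ 0) (hφ : phiEven x = 0) :
    Hbal x = -cos x - sin x ^ 2 / cos x := by
  have hgd : log ((1 + sin x) / cos x) = 1 / sin x := by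
    field_simp; unfold phiEven at hφ; linarith
  rw [Hbal, hgd, sin_two_mul]
  field_simp
  ring

lemma existsUnique_zero_of_strictAntiOn {f : ℝ → ℝ} {a b : ℝ} (hab : a ≤ b)
    (hf : ContinuousOn f (Icc a b)) (hanti : StrictAntiOn f (Icc a b))
    (ha : 0 < f a) (hb : f b < 0) : ∃! x, x ∈ Ioo a b ∧ f x = 0 := by
  obtain ⟨x, hx, hfx⟩ := intermediate_value_Ioo' hab hf ⟨hb, ha⟩
  refine ⟨x, ⟨hx, hfx⟩, fun y ⟨hy, hfy⟩ => ?_⟩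
  exact hanti.injOn (Ioo_subset_Icc_self hy) (Ioo_subset_Icc_self hx) (hfy.trans hfx.symm)

/-- H'(x) < -sin x < 0 on (0, x_root); since H(0⁺) = 1 > 0 and
H(x_root) = -cos x_root - sin²x_root/cos x_root < 0, H has a unique root
x_balanced in (0, x_root). -/
theorem Hbal_monotone_unique_root (xroot : ℝ)
    (hxroot : xroot ∈ Ioo 0 (π/2)) (hroot : phiEven xroot = 0) :
    (∀ x ∈ Ioo 0 xroot, deriv Hbal x < -sin x ∧ (0:ℝ) < sin x) ∧
    Filter.Tendsto Hbal (nhdsWithin 0 (Ioi 0)) (nhds 1) ∧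
    Hbal xroot = -cos xroot - sin xroot^2 / cos xroot ∧
    Hbal xroot < 0 ∧
    (∃! x, x ∈ Ioo 0 xroot ∧ Hbal x = 0) := by
  have hpi := pi_pos
  have hIcc : Icc 0 xroot ⊆ Ioo (-(π / 2)) (π / 2) := fun y hy =>
    ⟨by linarith [hy.1], hy.2.trans_lt hxroot.2⟩
  have hcos : ∀ y ∈ Icc 0 xroot, 0 < cos y := fun y hy => cos_pos_of_mem_Ioo (hIcc hy)
  have hsr : 0 < sin xroot := sin_pos_of_pos_of_lt_pi hxroot.1 (by linarith [hxroot.2])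
  have hderiv : ∀ x ∈ Ioo 0 xroot, deriv Hbal x < -sin x ∧ (0:ℝ) < sin x := fun x hx =>
    have hx' : x ∈ Ioo 0 (π / 2) := ⟨hx.1, hx.2.trans hxroot.2⟩
    ⟨deriv_Hbal_lt_neg_sin hx' (hroot ▸ strictAntiOn_phiEven ⟨hx.1.le, hx'.2⟩
        ⟨hxroot.1.le, hxroot.2⟩ hx.2),
      sin_pos_of_pos_of_lt_pi hx.1 (by linarith [hx'.2])⟩
  have hcont : ContinuousOn Hbal (Icc 0 xroot) := fun y hy =>
    (hasDerivAt_Hbal (hcos y hy).ne').continuousAt.continuousWithinAt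
  have hval := Hbal_of_phiEven_eq_zero hsr.ne' hroot
  have hneg : Hbal xroot < 0 := by
    have := hcos xroot ⟨hxroot.1.le, le_rfl⟩
    rw [hval]
    nlinarith [div_nonneg (sq_nonneg (sin xroot)) this.le]
  refine ⟨hderiv, ?_, hval, hneg, existsUnique_zero_of_strictAntiOn hxroot.1.le hcont ?_
    (by rw [Hbal_zero]; norm_num) hneg⟩
  · have h0 := (hasDerivAt_Hbal (x := 0) (by simp)).continuousAt.tendsto
    exact Hbal_zero ▸ h0.mono_left nhdsWithin_le_nhds
  · refine strictAntiOn_of_deriv_neg (convex_Icc _ _) hcont fun x hx => ?_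
    rw [interior_Icc] at hx
    linarith [hderiv x hx]
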